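/- arXiv:2004.00483 — 3 statements merged into one kernel-verified Lean document; each statement's English description precedes it below -/
import Mathlib

section
/- Let X and Y be normed vector spaces of functions with C ⊆ X, and let {T_t}_{t≥0} be a semigroup of mappings T_t : C → C (i.e. T_{t+s} = T_t ∘ T_s for t, s ≥ 0). Suppose there are constants M, γ, δ > 0 and ω̂ ∈ ℝ such that ‖T_t u₀‖_X ≤ M e^{ω̂ t} ‖u₀‖_Y^γ / t^δ for every t > 0 and u₀ ∈ C ∩ Y, and suppose there are α ∈ ℝ \ {1}, ω ∈ ℝ, ω_F ∈ ℝ and L ≥ 1 such that for a.e. t > 0 and all u₀ ∈ C: limsup_{h→0+} ‖T_{t+h} u₀ − T_t u₀‖_X / h ≤ (e^{ωt}/t) · (L/|1−α|) · [ b(t) + L ω_F ∫₀ᵗ b(s) e^{L ω_F (t−s)} ds ] · ‖u₀‖_X, where b(t) := 2 + ω_F L ∫₀ᵗ e^{ω_F s} ds. Then for a.e. t > 0 and all u₀ ∈ C: limsup_{h→0+} ‖T_{t+h} u₀ − T_t u₀‖_X / h ≤ (2^{δ+1} e^{(ω+ω̂)t/2} / t^{δ+1}) · (L M/|1−α|)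 · [ b(t/2) + L ω_F ∫₀^{t/2} b(s) e^{L ω_F (t/2 − s)} ds ] · ‖u₀‖_Y^γ. -/
open MeasureTheory Filter Real Set Topology Pointwise

noncomputable section

variable {X : Type*} [NormedAddCommGroup X] [NormedSpace ℝ X]

lemma qmp_half' : Measure.QuasiMeasurePreserving (fun t : ℝ => t / 2) volume volume := by
  have h := Measure.quasiMeasurePreserving_smul (μ := (volume : Measure ℝ)) (r := (2:ℝ)⁻¹)
    (by norm_num)
  have : (fun t : ℝ => t / 2) = ((2:ℝ)⁻¹ • ·) := by funext t; simp [smul_eq_mul]; ring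
  rwa [this]

lemma limsup_nonneg_aux' (f : ℝ → ℝ) (hf : ∀ h ∈ Ioi (0:ℝ), 0 ≤ f h) :
    0 ≤ Filter.limsup f (𝓝[>] (0:ℝ)) := by
  rw [Filter.limsup_eq]
  refine Real.sInf_nonneg fun a ha => ?_
  replace ha : ∀ᶠ n in 𝓝[>] (0:ℝ), f n ≤ a := ha
  obtain ⟨x, hx1, hx2⟩ := (ha.and (eventually_mem_nhdsWithin)).exists
  exact le_trans (hf x hx2) hx1

/-- **Corollary 2.9**: extrapolation of the L¹ Aronson–Bénilan type estimate through a
`Y`-`X` regularity estimate of the semigroup. Here the second space `Y` is realized as a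
linear subspace `SY ⊆ X` carrying a seminorm `NY`. -/
theorem statement9
    (C SY : Set X) (NY : X → ℝ)
    (hSYadd : ∀ x ∈ SY, ∀ y ∈ SY, x + y ∈ SY)
    (hSYsmul : ∀ c : ℝ, ∀ x ∈ SY, c • x ∈ SY)
    (hNYnonneg : ∀ x : X, 0 ≤ NY x)
    (hNYsmul : ∀ (c : ℝ) (x : X), NY (c • x) = |c| * NY x)
    (hNYadd : ∀ x y : X, NY (x + y) ≤ NY x + NY y)
    (Tt : ℝ → X → X)
    (hmaps : ∀ t : ℝ, 0 ≤ t → ∀ u₀ ∈ C, Tt t u₀ ∈ C)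
    (hsemigroup : ∀ s t : ℝ, 0 ≤ s → 0 ≤ t → ∀ u₀ ∈ C, Tt (t + s) u₀ = Tt t (Tt s u₀))
    (M γ δ : ℝ) (hM : 0 < M) (hγ : 0 < γ) (hδ : 0 < δ) (ω' : ℝ)
    (hreg : ∀ t > (0:ℝ), ∀ u₀ ∈ C ∩ SY,
      ‖Tt t u₀‖ ≤ M * exp (ω' * t) * (NY u₀) ^ γ / t ^ δ)
    (α ω ωF L : ℝ) (hα : α ≠ 1) (hL : 1 ≤ L)
    (b : ℝ → ℝ) (hb : ∀ t, b t = 2 + ωF * L * ∫ s in (0:ℝ)..t, exp (ωF * s))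
    (hest : ∀ᵐ t ∂(volume.restrict (Ioi (0:ℝ))), ∀ u₀ ∈ C,
      limsup (fun h : ℝ => ‖Tt (t + h) u₀ - Tt t u₀‖ / h) (𝓝[>] 0) ≤
        (exp (ω * t) / t) * (L / |1 - α|) *
          (b t + L * ωF * ∫ s in (0:ℝ)..t, b s * exp (L * ωF * (t - s))) * ‖u₀‖) :
    ∀ᵐ t ∂(volume.restrict (Ioi (0:ℝ))), ∀ u₀ ∈ C ∩ SY,
      limsup (fun h : ℝ => ‖Tt (t + h) u₀ - Tt t u₀‖ / h) (𝓝[>] 0) ≤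
        ((2:ℝ) ^ (δ + 1) * exp ((ω + ω') * t / 2) / t ^ (δ + 1)) * (L * M / |1 - α|) *
          (b (t / 2) + L * ωF * ∫ s in (0:ℝ)..(t / 2), b s * exp (L * ωF * (t / 2 - s))) *
          (NY u₀) ^ γ := by
  have hα1 : (0:ℝ) < |1 - α| := abs_pos.mpr (sub_ne_zero.mpr (Ne.symm hα))
  have hL0 : (0:ℝ) < L := lt_of_lt_of_le one_pos hL
  set P : ℝ → Prop := fun t => ∀ u₀ ∈ C,
      limsup (fun h : ℝ => ‖Tt (t + h) u₀ - Tt t u₀‖ / h) (𝓝[>] 0) ≤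
        (exp (ω * t) / t) * (L / |1 - α|) *
          (b t + L * ωF * ∫ s in (0:ℝ)..t, b s * exp (L * ωF * (t - s))) * ‖u₀‖ with hPdef
  have h1 : ∀ᵐ s ∂(volume : Measure ℝ), s ∈ Ioi (0:ℝ) → P s := ae_imp_of_ae_restrict hest
  have h2 : ∀ᵐ t ∂(volume : Measure ℝ), (t / 2) ∈ Ioi (0:ℝ) → P (t / 2) := qmp_half'.ae h1
  rw [ae_restrict_iff' measurableSet_Ioi]
  filter_upwards [h2] with t hPt ht u₀ hu₀
  obtain ⟨huC, huY⟩ := hu₀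
  have ht0 : (0:ℝ) < t := ht
  have ht2 : (0:ℝ) < t / 2 := by linarith
  replace hPt := hPt ht2
  set v := Tt (t / 2) u₀ with hv
  have hvC : v ∈ C := hmaps _ ht2.le u₀ huC
  have hfg : (fun h : ℝ => ‖Tt (t + h) u₀ - Tt t u₀‖ / h)
      =ᶠ[𝓝[>] (0:ℝ)] (fun h : ℝ => ‖Tt (t / 2 + h) v - Tt (t / 2) v‖ / h) := by
    filter_upwards [eventually_mem_nhdsWithin] with h hh
    have hh0 : (0:ℝ) < h := hh
    have e1 : Tt (t + h) u₀ = Tt (t / 2 + h) v := by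
      rw [hv, ← hsemigroup (t / 2) (t / 2 + h) ht2.le (by linarith) u₀ huC]
      norm_num; ring_nf
    have e2 : Tt t u₀ = Tt (t / 2) v := by
      rw [hv, ← hsemigroup (t / 2) (t / 2) ht2.le ht2.le u₀ huC]
      norm_num
    rw [e1, e2]
  rw [Filter.limsup_congr hfg]
  have key := hPt v hvC
  set K : ℝ := exp (ω * (t / 2)) / (t / 2) * (L / |1 - α|) with hK
  set β : ℝ := b (t / 2) + L * ωF * ∫ s in (0:ℝ)..(t / 2), b s * exp (L * ωF * (t / 2 - s))
    with hβ
  have hKpos : 0 < K := mul_pos (div_pos (exp_pos _) ht2) (div_pos hL0 hα1)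
  rcases le_or_gt 0 β with hβ0 | hβ0
  · have hvnorm : ‖v‖ ≤ M * exp (ω' * (t / 2)) * (NY u₀) ^ γ / (t / 2) ^ δ :=
      hreg (t / 2) ht2 u₀ ⟨huC, huY⟩
    have step2 : K * β * ‖v‖ ≤ K * β * (M * exp (ω' * (t / 2)) * (NY u₀) ^ γ / (t / 2) ^ δ) :=
      mul_le_mul_of_nonneg_left hvnorm (mul_nonneg hKpos.le hβ0)
    refine le_trans key (le_trans step2 (le_of_eq ?_))
    have e2 : ((2:ℝ)) ^ (δ + 1) = 2 ^ δ * 2 := by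
      rw [Real.rpow_add two_pos, Real.rpow_one]
    have e3 : t ^ (δ + 1) = t ^ δ * t := by
      rw [Real.rpow_add ht0, Real.rpow_one]
    have e4 : (t / 2) ^ δ = t ^ δ / 2 ^ δ := Real.div_rpow ht0.le (by norm_num : (0:ℝ) ≤ 2) δ
    have e5 : exp (ω * (t / 2)) * exp (ω' * (t / 2)) = exp ((ω + ω') * t / 2) := by
      rw [← Real.exp_add]; ring_nf
    have htδ : (0:ℝ) < t ^ δ := Real.rpow_pos_of_pos ht0 δ
    have h2δ : (0:ℝ) < (2:ℝ) ^ δ := Real.rpow_pos_of_pos two_pos δ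
    rw [hK, e2, e3, e4, ← e5]
    field_simp
  · -- β < 0 : then every element of C has norm 0, in particular u₀ = 0.
    have h0 := hPt u₀ huC
    have hnn : 0 ≤ limsup (fun h : ℝ => ‖Tt (t / 2 + h) u₀ - Tt (t / 2) u₀‖ / h) (𝓝[>] (0:ℝ)) :=
      limsup_nonneg_aux' _ (fun h hh => div_nonneg (norm_nonneg _) (le_of_lt hh))
    have hKβu : 0 ≤ K * β * ‖u₀‖ := le_trans hnn h0
    have hu0 : u₀ = 0 := by
      by_contra hne
      have h1' : 0 < ‖u₀‖ := norm_pos_iff.mpr hne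
      have : K * β * ‖u₀‖ < 0 :=
        mul_neg_of_neg_of_pos (mul_neg_of_pos_of_neg hKpos hβ0) h1'
      linarith
    have hNY0 : NY u₀ = 0 := by
      rw [hu0, show (0 : X) = (0:ℝ) • (0:X) by simp, hNYsmul]; simp
    have hle0 : K * β * ‖v‖ ≤ 0 :=
      mul_nonpos_of_nonpos_of_nonneg
        (mul_nonpos_of_nonneg_of_nonpos hKpos.le hβ0.le) (norm_nonneg _)
    refine le_trans key (le_trans hle0 (le_of_eq ?_))
    rw [hNY0, Real.zero_rpow (ne_of_gt hγ), mul_zero]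
end
end

section
/- Let X be a vector space with a norm, α ∈ ℝ \ {1}, and let A ⊆ X × X be an operator that is homogeneous of order α. Then for every f ∈ X, λ, μ > 0 and u, v ∈ X, the following two inclusions are equivalent: (i) λ^{1/(α−1)} v ∈ u + μ(Au − f·λ^{α/(α−1)}), i.e. there exists w ∈ A u with λ^{1/(α−1)} v = u + μ(w − λ^{α/(α−1)} f); (ii) v ∈ λ^{1/(1−α)} u + λμ (A(λ^{1/(1−α)} u) − f), i.e. there exists w' ∈ A(λ^{1/(1−α)} u) with v = λ^{1/(1−α)} u + λμ(w' − f). Equivalently, in terms of resolvents, λ^{1/(α−1)} J^{A−f}_{λμ} v = J^{A − λ^{α/(α−1)} f}_{μ}[λ^{1/(α−1)} v] whenever these resolvents are defined, where J^{B}_{μ} = (I + μB)^{−1}. -/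
open MeasureTheory Filter Real Set Topology Pointwise

noncomputable section

variable {X : Type*} [NormedAddCommGroup X] [NormedSpace ℝ X]

/-- The domain of a possibly multivalued operator `A ⊆ X × X`. -/
def opDomain (A : Set (X × X)) : Set X := {u | ∃ v, (u, v) ∈ A}

/-- An operator `A ⊆ X × X` is accretive. -/
def IsAccretive (A : Set (X × X)) : Prop :=
  ∀ p ∈ A, ∀ q ∈ A, ∀ lam : ℝ, 0 ≤ lam →
    ‖p.1 - q.1‖ ≤ ‖p.1 - q.1 + lam • (p.2 - q.2)‖

/-- An operator `A` is m-accretive: accretive plus the range condition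
`Rg(I + λ A) = X` for all `λ > 0`. -/
def IsMAccretive (A : Set (X × X)) : Prop :=
  IsAccretive A ∧ ∀ lam : ℝ, 0 < lam → ∀ z : X, ∃ p ∈ A, p.1 + lam • p.2 = z

/-- The shifted operator `A + ω I`. -/
def opShift (A : Set (X × X)) (ω : ℝ) : Set (X × X) :=
  {p | ∃ q ∈ A, p = (q.1, q.2 + ω • q.1)}

/-- `A` is ω-quasi m-accretive: `A + ω I` is accretive and `Rg(I + λ A) = X`
for all `λ > 0` with `λ ω < 1`. -/
def IsQuasiMAccretive (A : Set (X × X)) (ω : ℝ) : Prop :=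
  IsAccretive (opShift A ω) ∧
    ∀ lam : ℝ, 0 < lam → lam * ω < 1 → ∀ z : X, ∃ p ∈ A, p.1 + lam • p.2 = z

/-- `A` is homogeneous of order `α`: `(0,0) ∈ A` and for `u ∈ D(A)`, `λ ≥ 0` one has
`λ u ∈ D(A)` and `A(λ u) = λ^α A u`. -/
def IsHomogeneousOp (A : Set (X × X)) (α : ℝ) : Prop :=
  ((0 : X), (0 : X)) ∈ A ∧
    ∀ u ∈ opDomain A, ∀ lam : ℝ, 0 ≤ lam →
      lam • u ∈ opDomain A ∧
        {w : X | (lam • u, w) ∈ A} = (lam ^ α) • {v : X | (u, v) ∈ A}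

/-- The perturbed operator `A + F`. -/
def opPerturb (A : Set (X × X)) (F : X → X) : Set (X × X) :=
  {p | ∃ v, (p.1, v) ∈ A ∧ p.2 = v + F p.1}

/-- `u` is a mild solution on `[0,T]` of `du/dt + B(u(t)) ∋ f(t)`, `u(0) = u₀`,
in the sense of Bénilan–Crandall ε-discretizations. -/
def IsMildSolution (B : Set (X × X)) (T : ℝ) (f : ℝ → X) (u₀ : X) (u : ℝ → X) : Prop :=
  ContinuousOn u (Icc 0 T) ∧ u 0 = u₀ ∧
    ∀ ε > 0, ∃ (N : ℕ) (τ : ℕ → ℝ) (v : ℕ → X), 0 < N ∧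
      τ 0 = 0 ∧ τ N = T ∧ v 0 = u₀ ∧
      (∀ i < N, τ i < τ (i + 1) ∧ τ (i + 1) - τ i < ε) ∧
      (∑ i ∈ Finset.range N, ∫ s in τ i..τ (i + 1),
          ‖f s - (τ (i + 1) - τ i)⁻¹ • ∫ r in τ i..τ (i + 1), f r‖) < ε ∧
      (∀ i < N, ∃ w : X, (v (i + 1), w) ∈ B ∧
          (τ (i + 1) - τ i)⁻¹ • (v (i + 1) - v i) + w
            = (τ (i + 1) - τ i)⁻¹ • ∫ r in τ i..τ (i + 1), f r) ∧
      (∀ i < N, ∀ s ∈ Ioc (τ i) (τ (i + 1)), ‖u s - v (i + 1)‖ < ε)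

/-! With `b = λ^{1/(1-α)}` homogeneity gives `A(b u) = b^α A u`, and the exponents are chosen so
that `λ b^α = b`. Multiplying inclusion (i) by `b` and writing `w' = b^α w` therefore turns it
into inclusion (ii), and conversely. -/

namespace IsHomogeneousOp

variable {A : Set (X × X)} {α : ℝ}

theorem fiber_smul (hA : IsHomogeneousOp A α) {b : ℝ} (hb : 0 < b) (u : X) :
    {w : X | (b • u, w) ∈ A} = (b ^ α) • {w : X | (u, w) ∈ A} := by
  by_cases hu : u ∈ opDomain A
  · exact (hA.2 u hu b hb.le).2
  · have hbu : b • u ∉ opDomain A := fun hbu => hu <| by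
      simpa [inv_smul_smul₀ hb.ne'] using (hA.2 _ hbu b⁻¹ (inv_nonneg.2 hb.le)).1
    have empty_of_not_mem : ∀ x ∉ opDomain A, {w : X | (x, w) ∈ A} = ∅ :=
      fun x hx => Set.eq_empty_of_forall_notMem fun w hw => hx ⟨w, hw⟩
    rw [empty_of_not_mem _ hbu, empty_of_not_mem _ hu, Set.smul_set_empty]

theorem exists_mem_smul_iff (hA : IsHomogeneousOp A α) {b : ℝ} (hb : 0 < b) (u : X)
    (P : X → Prop) :
    (∃ w', (b • u, w') ∈ A ∧ P w') ↔ ∃ w, (u, w) ∈ A ∧ P (b ^ α • w) := by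
  have := congrArg (fun S : Set X => ∃ w' ∈ S, P w') (hA.fiber_smul hb u)
  simp only [← Set.image_smul, Set.exists_mem_image, Set.mem_ofPred_eq] at this
  exact Iff.of_eq this

end IsHomogeneousOp

theorem Real.rpow_div_sub_one_eq_inv {x : ℝ} (hx : 0 < x) {α : ℝ} (hα : α ≠ 1) (β : ℝ) :
    x ^ (β / (α - 1)) = ((x ^ (1 / (1 - α))) ^ β)⁻¹ := by
  have : α - 1 ≠ 0 := sub_ne_zero.2 hα
  have : 1 - α ≠ 0 := sub_ne_zero.2 hα.symm
  rw [← Real.rpow_mul hx.le, ← Real.rpow_neg hx.le]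
  congr 1
  field_simp
  ring

theorem Real.mul_rpow_one_div_one_sub_rpow {x : ℝ} (hx : 0 < x) {α : ℝ} (hα : α ≠ 1) :
    x * (x ^ (1 / (1 - α))) ^ α = x ^ (1 / (1 - α)) := by
  have : 1 - α ≠ 0 := sub_ne_zero.2 hα.symm
  rw [← Real.rpow_mul hx.le]
  nth_rw 1 [← Real.rpow_one x]
  rw [← Real.rpow_add hx]
  congr 1
  field_simp
  ring

theorem statement13_general
    (α : ℝ) (hα : α ≠ 1) (A : Set (X × X)) (hAhom : IsHomogeneousOp A α)
    (f : X) (lam μ : ℝ) (hlam : 0 < lam) (u v : X) :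
    (∃ w : X, (u, w) ∈ A ∧
        (lam ^ (1 / (α - 1))) • v = u + μ • (w - (lam ^ (α / (α - 1))) • f)) ↔
    (∃ w' : X, ((lam ^ (1 / (1 - α))) • u, w') ∈ A ∧
        v = (lam ^ (1 / (1 - α))) • u + (lam * μ) • (w' - f)) := by
  have hb : 0 < lam ^ (1 / (1 - α)) := Real.rpow_pos_of_pos hlam _
  have hscale := Real.mul_rpow_one_div_one_sub_rpow hlam hα
  rw [Real.rpow_div_sub_one_eq_inv hlam hα, Real.rpow_div_sub_one_eq_inv hlam hα,
    Real.rpow_one, hAhom.exists_mem_smul_iff hb]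
  set b := lam ^ (1 / (1 - α))
  set a := b ^ α
  refine exists_congr fun w => and_congr_right fun _ => ?_
  have ha : a ≠ 0 := (Real.rpow_pos_of_pos hb α).ne'
  rw [inv_smul_eq_iff₀ hb.ne', ← hscale]
  constructor <;> rintro rfl <;> match_scalars <;> field_simp

/-- **Resolvent identity (2.26)** for homogeneous operators: the two resolvent
inclusions are equivalent. -/
theorem statement13
    (α : ℝ) (hα : α ≠ 1) (A : Set (X × X)) (hAhom : IsHomogeneousOp A α)
    (f : X) (lam μ : ℝ) (hlam : 0 < lam) (hμ : 0 < μ) (u v : X) :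
    (∃ w : X, (u, w) ∈ A ∧
        (lam ^ (1 / (α - 1))) • v = u + μ • (w - (lam ^ (α / (α - 1))) • f)) ↔
    (∃ w' : X, ((lam ^ (1 / (1 - α))) • u, w') ∈ A ∧
        v = (lam ^ (1 / (1 - α))) • u + (lam * μ) • (w' - f)) :=
  statement13_general α hα A hAhom f lam μ hlam u v
end
end

section
/- Let X be a Banach space, α ∈ ℝ \ {1}, and let A be an m-accretive operator on X that is homogeneous of order α, so that for each μ > 0 and f ∈ X the resolvent J^{A−f}_{μ} = (I + μ(A − f))^{−1} is a single-valued everywhere defined mapping on X. Then for every f ∈ X, λ > 0, t > 0, n ∈ ℕ with n ≥ 1, and u₀ ∈ X: λ^{1/(α−1)} ([J^{A−f}_{λt/n}]^n u₀) = [J^{A − λ^{α/(α−1)} f}_{t/n}]^n (λ^{1/(α−1)} u₀), where [J]^n denotes the n-fold composition of the map J. -/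
open MeasureTheory Filter Real Set Topology Pointwise

noncomputable section

variable {X : Type*} [NormedAddCommGroup X] [NormedSpace ℝ X]

/-!
With `c = λ^{1/(α-1)}`, homogeneity makes `u ↦ c u` carry solutions of the resolvent equation
of `A - f` with step `λt/n` to solutions of that of `A - c^α f = A - λ^{α/(α-1)} f` with step
`t/n`, since `(t/n) c^α = c (λt/n)`. Accretivity makes resolvents unique, so `c •` conjugates
`J1` to `J2`, and hence also their `n`-th iterates.
-/

/-- `IsResolventValue A f μ v u` says `u = J^{A-f}_μ v`, i.e. `v ∈ u + μ (A u - f)`. -/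
def IsResolventValue (A : Set (X × X)) (f : X) (μ : ℝ) (v u : X) : Prop :=
  ∃ w, (u, w) ∈ A ∧ u + μ • (w - f) = v

theorem IsAccretive.isResolventValue_unique {A : Set (X × X)} (hA : IsAccretive A)
    {f v u u' : X} {μ : ℝ} (hμ : 0 ≤ μ) (hu : IsResolventValue A f μ v u)
    (hu' : IsResolventValue A f μ v u') : u = u' := by
  obtain ⟨w, hw, rfl⟩ := hu
  obtain ⟨w', hw', hvw'⟩ := hu'
  have hzero : u - u' + μ • (w - w') = 0 := by
    linear_combination (norm := module) -hvw'
  have := hA (u, w) hw (u', w') hw' μ hμ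
  rw [hzero, norm_zero] at this
  exact sub_eq_zero.mp (norm_le_zero_iff.mp this)

theorem IsHomogeneousOp.smul_mem {A : Set (X × X)} {α : ℝ} (hA : IsHomogeneousOp A α)
    {u w : X} (hw : (u, w) ∈ A) {c : ℝ} (hc : 0 ≤ c) : (c • u, c ^ α • w) ∈ A := by
  have hmem : c ^ α • w ∈ {w' : X | (c • u, w') ∈ A} := by
    rw [(hA.2 u ⟨w, hw⟩ c hc).2]
    exact smul_mem_smul_set hw
  exact hmem

theorem IsHomogeneousOp.isResolventValue_smul {A : Set (X × X)} {α : ℝ}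
    (hA : IsHomogeneousOp A α) {f v u : X} {c μ ν : ℝ} (hc : 0 ≤ c) (hν : ν * c ^ α = c * μ)
    (hu : IsResolventValue A f μ v u) :
    IsResolventValue A (c ^ α • f) ν (c • v) (c • u) := by
  obtain ⟨w, hw, rfl⟩ := hu
  refine ⟨c ^ α • w, hA.smul_mem hw hc, ?_⟩
  rw [← smul_sub, smul_smul, hν, smul_add, smul_smul]

theorem semiconj_smul_of_isResolventValue {A : Set (X × X)} {α : ℝ} (hA : IsAccretive A)
    (hAhom : IsHomogeneousOp A α) {f : X} {c μ ν : ℝ} (hc : 0 ≤ c) (hν₀ : 0 ≤ ν)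
    (hν : ν * c ^ α = c * μ) {J₁ J₂ : X → X} (hJ₁ : ∀ v, IsResolventValue A f μ v (J₁ v))
    (hJ₂ : ∀ v, IsResolventValue A (c ^ α • f) ν v (J₂ v)) :
    Function.Semiconj (c • ·) J₁ J₂ := fun v =>
  hA.isResolventValue_unique hν₀ (hAhom.isResolventValue_smul hc hν (hJ₁ v)) (hJ₂ (c • v))

theorem rpow_one_div_sub_one_rpow {x : ℝ} (hx : 0 ≤ x) (α : ℝ) :
    (x ^ (1 / (α - 1))) ^ α = x ^ (α / (α - 1)) := by
  rw [← Real.rpow_mul hx, one_div_mul_eq_div]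

theorem rpow_one_div_sub_one_mul_self {x : ℝ} (hx : 0 < x) {α : ℝ} (hα : α ≠ 1) :
    x ^ (1 / (α - 1)) * x = x ^ (α / (α - 1)) := by
  have hα₁ : α - 1 ≠ 0 := sub_ne_zero.mpr hα
  conv_lhs => rhs; rw [← Real.rpow_one x]
  rw [← Real.rpow_add hx]
  congr 1
  field_simp
  ring

theorem statement14_general
    (α : ℝ) (hα : α ≠ 1)
    (A : Set (X × X)) (hA : IsMAccretive A) (hAhom : IsHomogeneousOp A α)
    (f : X) (lam t : ℝ) (hlam : 0 < lam) (ht : 0 < t) (n : ℕ) (u₀ : X)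
    (J1 J2 : X → X)
    (hJ1 : ∀ v : X, ∃ w : X, (J1 v, w) ∈ A ∧ J1 v + (lam * t / n) • (w - f) = v)
    (hJ2 : ∀ v : X, ∃ w : X, (J2 v, w) ∈ A ∧
      J2 v + (t / n) • (w - (lam ^ (α / (α - 1))) • f) = v) :
    (lam ^ (1 / (α - 1))) • (J1^[n] u₀) = J2^[n] ((lam ^ (1 / (α - 1))) • u₀) := by
  set c := lam ^ (1 / (α - 1))
  have hcα : c ^ α = lam ^ (α / (α - 1)) := rpow_one_div_sub_one_rpow hlam.le α
  have hstep : t / n * c ^ α = c * (lam * t / n) := by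
    rw [hcα, ← rpow_one_div_sub_one_mul_self hlam hα]
    ring
  rw [← hcα] at hJ2
  exact (semiconj_smul_of_isResolventValue hA.1 hAhom (by positivity) (by positivity) hstep
    hJ1 hJ2).iterate_right n u₀

/-- **Identity (2.37)**: the iterated resolvents of a homogeneous m-accretive operator
satisfy the scaling identity
`λ^{1/(α-1)} ([J^{A-f}_{λt/n}]ⁿ u₀) = [J^{A-λ^{α/(α-1)} f}_{t/n}]ⁿ (λ^{1/(α-1)} u₀)`. -/
theorem statement14 [CompleteSpace X]
    (α : ℝ) (hα : α ≠ 1)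
    (A : Set (X × X)) (hA : IsMAccretive A) (hAhom : IsHomogeneousOp A α)
    (f : X) (lam t : ℝ) (hlam : 0 < lam) (ht : 0 < t) (n : ℕ) (hn : 1 ≤ n) (u₀ : X)
    (J1 J2 : X → X)
    (hJ1 : ∀ v : X, ∃ w : X, (J1 v, w) ∈ A ∧ J1 v + (lam * t / n) • (w - f) = v)
    (hJ2 : ∀ v : X, ∃ w : X, (J2 v, w) ∈ A ∧
      J2 v + (t / n) • (w - (lam ^ (α / (α - 1))) • f) = v) :
    (lam ^ (1 / (α - 1))) • (J1^[n] u₀) = J2^[n] ((lam ^ (1 / (α - 1))) • u₀) :=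
  statement14_general α hα A hA hAhom f lam t hlam ht n u₀ J1 J2 hJ1 hJ2
end
end
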